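/- arXiv:1109.2848 — 2 statements merged into one kernel-verified Lean document; each statement's English description precedes it below -/
import Mathlib

section
/- Let N : ℕ, f : ℝ → ℂ any function, and ρ : Fin N → ℂ with ρ ≠ 0. Then the image of the projection map is null: B(P_f(ρ), P_f(ρ)) = 0. (Toy-model form of Proposition 1, item (proj-prop1): the projection maps every vector onto the quadric B(λ,λ) = 0.) -/
noncomputable section

open scoped BigOperators

namespace PureSpinorToy

variable {N : ℕ}

/-- Complex bilinear pairing `B(ρ,σ) = ∑ I, ρ_I σ_I`. -/
def B (ρ σ : Fin N → ℂ) : ℂ := ∑ I, ρ I * σ I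

/-- Hermitian inner product `⟪ρ,σ⟫ = ∑ I, conj(ρ_I) σ_I`. -/
def hInner (ρ σ : Fin N → ℂ) : ℂ := ∑ I, (starRingEnd ℂ) (ρ I) * σ I

/-- Norm square `‖ρ‖² = ⟪ρ,ρ⟫` (a nonnegative real). -/
def nsq (ρ : Fin N → ℂ) : ℝ := (hInner ρ ρ).re

/-- Componentwise complex conjugation `ρ̄`. -/
def conjFun (ρ : Fin N → ℂ) : Fin N → ℂ := fun I => (starRingEnd ℂ) (ρ I)

/-- `ζ(ρ) = B(ρ,ρ)/‖ρ‖²`. -/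
def zeta (ρ : Fin N → ℂ) : ℂ := B ρ ρ / (nsq ρ : ℂ)

/-- `ξ(ρ) = |ζ(ρ)|²`. -/
def xi (ρ : Fin N → ℂ) : ℝ := Complex.normSq (zeta ρ)

/-- The family of projection maps
`P_f(ρ) = f(ξ(ρ)) • (ρ − (ζ(ρ)/(1+√(1−ξ(ρ)))) • ρ̄)`. -/
def P (f : ℝ → ℂ) (ρ : Fin N → ℂ) : Fin N → ℂ :=
  f (xi ρ) • (ρ - (zeta ρ / (1 + (Real.sqrt (1 - xi ρ) : ℂ))) • conjFun ρ)

/-- The special function `h(t) = (1+√(1−t))/(2√(1−t))`. -/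
def h (t : ℝ) : ℂ := (((1 + Real.sqrt (1 - t)) / (2 * Real.sqrt (1 - t)) : ℝ) : ℂ)

/-- The potential `Φ(ρ) = (‖ρ‖²/2)(1+√(1−ξ(ρ)))`. -/
def Phi (ρ : Fin N → ℂ) : ℝ := (nsq ρ / 2) * (1 + Real.sqrt (1 - xi ρ))

/-!
Write `P_f(ρ) = a • (ρ - c • ρ̄)`. Since `B(ρ,ρ) = ζ‖ρ‖²`, `B(ρ,ρ̄) = ‖ρ‖²` and
`B(ρ̄,ρ̄) = conj B(ρ,ρ)`, bilinearity gives `B(P_f ρ, P_f ρ) = a²‖ρ‖² (ζ̄c² - 2c + ζ)`,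
and `c = ζ / (1 + √(1 - |ζ|²))` is a root of this quadratic; the square root is real
because `|B(ρ,ρ)| ≤ ‖ρ‖²`.
-/

lemma nsq_eq_sum_normSq (ρ : Fin N → ℂ) : nsq ρ = ∑ I, Complex.normSq (ρ I) := by
  simp [nsq, hInner, Complex.normSq_apply]

lemma B_conjFun_right (ρ : Fin N → ℂ) : B ρ (conjFun ρ) = nsq ρ := by
  simp [nsq_eq_sum_normSq, B, conjFun, Complex.mul_conj]

lemma B_conjFun_conjFun (ρ : Fin N → ℂ) :
    B (conjFun ρ) (conjFun ρ) = starRingEnd ℂ (B ρ ρ) := by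
  simp [B, conjFun]

lemma norm_B_self_le_nsq (ρ : Fin N → ℂ) : ‖B ρ ρ‖ ≤ nsq ρ := by
  rw [nsq_eq_sum_normSq, B]
  refine (norm_sum_le _ _).trans_eq (Finset.sum_congr rfl fun I _ => ?_)
  rw [norm_mul, Complex.normSq_eq_norm_sq, sq]

/-- At `ρ = 0` both sides vanish, the right one through the junk value `zeta 0 = 0 / 0 = 0`. -/
lemma B_self_eq_zeta_mul_nsq (ρ : Fin N → ℂ) : B ρ ρ = zeta ρ * nsq ρ := by
  rcases eq_or_ne (nsq ρ) 0 with h | h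
  · simpa [h] using norm_B_self_le_nsq ρ
  · rw [zeta, div_mul_cancel₀ _ (Complex.ofReal_ne_zero.mpr h)]

lemma xi_le_one (ρ : Fin N → ℂ) : xi ρ ≤ 1 := by
  have hζ : ‖zeta ρ‖ ≤ 1 := by
    rw [zeta, norm_div, Complex.norm_real, Real.norm_eq_abs]
    exact div_le_one_of_le₀ ((norm_B_self_le_nsq ρ).trans (le_abs_self _)) (abs_nonneg _)
  rw [xi, Complex.normSq_eq_norm_sq]
  exact pow_le_one₀ (norm_nonneg _) hζ

lemma B_smul_sub_smul_self (a c : ℂ) (x y : Fin N → ℂ) :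
    B (a • (x - c • y)) (a • (x - c • y)) =
      a ^ 2 * (B x x - 2 * c * B x y + c ^ 2 * B y y) := by
  simp only [B, Pi.smul_apply, Pi.sub_apply, smul_eq_mul, Finset.mul_sum,
    ← Finset.sum_sub_distrib, ← Finset.sum_add_distrib]
  exact Finset.sum_congr rfl fun I _ => by ring

/-- `ζ / (1 + s)` is the root `(1 - s) / ζ̄` of `ζ̄ c² - 2c + ζ`, written so that it stays
defined at `ζ = 0`. -/
lemma conj_mul_sq_sub_two_mul_add_eq_zero {ζ : ℂ} {s : ℝ} (hs₀ : 0 ≤ s)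
    (hs : s ^ 2 = 1 - Complex.normSq ζ) :
    starRingEnd ℂ ζ * (ζ / (1 + s)) ^ 2 - 2 * (ζ / (1 + s)) + ζ = 0 := by
  have hsC : (s : ℂ) ^ 2 = 1 - ζ * starRingEnd ℂ ζ := by
    rw [Complex.mul_conj]; exact_mod_cast hs
  have hs1 : (1 : ℂ) + s ≠ 0 := by exact_mod_cast (by positivity : (1 : ℝ) + s ≠ 0)
  field_simp
  linear_combination ζ * hsC

theorem statement2_general {N : ℕ} (f : ℝ → ℂ) (ρ : Fin N → ℂ) :
    B (P f ρ) (P f ρ) = 0 := by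
  rw [P, B_smul_sub_smul_self, B_conjFun_right, B_conjFun_conjFun, B_self_eq_zeta_mul_nsq,
    map_mul, Complex.conj_ofReal]
  have hroot := conj_mul_sq_sub_two_mul_add_eq_zero (Real.sqrt_nonneg (1 - xi ρ))
    (Real.sq_sqrt (sub_nonneg.mpr (xi_le_one ρ)))
  linear_combination f (xi ρ) ^ 2 * (nsq ρ : ℂ) * hroot

/-- Toy model, Proposition 1 (proj-prop1): the image of the projection map is null. -/
theorem statement2 {N : ℕ} (f : ℝ → ℂ) (ρ : Fin N → ℂ) (hρ : ρ ≠ 0) :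
    B (P f ρ) (P f ρ) = 0 :=
  statement2_general f ρ

end PureSpinorToy
end
end

section
/- Let N : ℕ, f : ℝ → ℂ, and ρ : Fin N → ℂ with ρ ≠ 0. Then P_f(ρ) = 0 if and only if f(ξ(ρ)) = 0 or ξ(ρ) = 1. (Toy-model form of Proposition 1, item (kerP): the zero-locus of the projection away from the origin consists exactly of the zeros of f and of the vectors with ξ = 1, i.e. those satisfying ρ = ζ(ρ)·ρ̄.) -/
noncomputable section

open scoped BigOperators

namespace PureSpinorToy

variable {N : ℕ}

/-!
Pairing `ρ - c • ρ̄` with `ρ` and with `ρ̄` gives `‖ρ‖² (1 - c ζ̄)` and `‖ρ‖² (ζ - c)`. If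
`ρ = c • ρ̄` both vanish, so `c = ζ` and `|ζ|² = 1`; conversely, for `c = ζ` with `ξ = 1` the
squared norm of `ρ - ζ • ρ̄` is a combination of the two pairings, hence zero. When `ξ = 1` the
square root in `P_f` vanishes and its coefficient is exactly `ζ`.
-/

open Matrix
open scoped ComplexOrder

theorem hInner_eq_dotProduct (ρ σ : Fin N → ℂ) : hInner ρ σ = star ρ ⬝ᵥ σ := rfl

theorem B_eq_dotProduct (ρ σ : Fin N → ℂ) : B ρ σ = ρ ⬝ᵥ σ := rfl

theorem conjFun_eq_star (ρ : Fin N → ℂ) : conjFun ρ = star ρ := rfl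

theorem hInner_sub_smul_left (a b w : Fin N → ℂ) (c : ℂ) :
    hInner (a - c • b) w = hInner a w - star c * hInner b w := by
  simp only [hInner_eq_dotProduct, star_sub, star_smul, sub_dotProduct, smul_dotProduct,
    smul_eq_mul]

theorem ofReal_nsq (ρ : Fin N → ℂ) : (nsq ρ : ℂ) = star ρ ⬝ᵥ ρ :=
  Complex.ext rfl (Complex.nonneg_iff.1 (dotProduct_star_self_nonneg ρ)).2

theorem nsq_pos {ρ : Fin N → ℂ} (hρ : ρ ≠ 0) : 0 < nsq ρ :=
  (Complex.pos_iff.1 (dotProduct_star_self_pos_iff.2 hρ)).1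

theorem zeta_mul_nsq {ρ : Fin N → ℂ} (hρ : ρ ≠ 0) : zeta ρ * nsq ρ = B ρ ρ :=
  div_mul_cancel₀ _ (Complex.ofReal_ne_zero.2 (nsq_pos hρ).ne')

theorem hInner_self_sub_smul_conjFun {ρ : Fin N → ℂ} (hρ : ρ ≠ 0) (c : ℂ) :
    hInner ρ (ρ - c • conjFun ρ) = nsq ρ * (1 - c * star (zeta ρ)) := by
  rw [hInner_eq_dotProduct, conjFun_eq_star, dotProduct_sub, dotProduct_smul,
    star_dotProduct_star, ← B_eq_dotProduct ρ ρ, ← zeta_mul_nsq hρ, ← ofReal_nsq, star_mul', Complex.star_def,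
    Complex.conj_ofReal, smul_eq_mul]
  ring

theorem hInner_conjFun_sub_smul_conjFun {ρ : Fin N → ℂ} (hρ : ρ ≠ 0) (c : ℂ) :
    hInner (conjFun ρ) (ρ - c • conjFun ρ) = nsq ρ * (zeta ρ - c) := by
  rw [hInner_eq_dotProduct, conjFun_eq_star, star_star, dotProduct_sub, dotProduct_smul,
    dotProduct_comm ρ (star ρ), ← B_eq_dotProduct ρ ρ, ← zeta_mul_nsq hρ, ← ofReal_nsq, smul_eq_mul]
  ring

theorem sub_smul_conjFun_eq_zero_iff {ρ : Fin N → ℂ} (hρ : ρ ≠ 0) (c : ℂ) :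
    ρ - c • conjFun ρ = 0 ↔ c = zeta ρ ∧ xi ρ = 1 := by
  constructor
  · intro hv
    have hn : (nsq ρ : ℂ) ≠ 0 := Complex.ofReal_ne_zero.2 (nsq_pos hρ).ne'
    have h₁ := hInner_self_sub_smul_conjFun hρ c
    have h₂ := hInner_conjFun_sub_smul_conjFun hρ c
    rw [hv, hInner_eq_dotProduct, dotProduct_zero, eq_comm, mul_eq_zero, or_iff_right hn,
      sub_eq_zero] at h₁ h₂
    subst h₂
    refine ⟨rfl, ?_⟩
    rw [Complex.star_def, Complex.mul_conj] at h₁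
    exact_mod_cast h₁.symm
  · rintro ⟨rfl, hξ⟩
    have hζ : zeta ρ * star (zeta ρ) = 1 := by
      rw [Complex.star_def, Complex.mul_conj, ← xi, hξ, Complex.ofReal_one]
    rw [← dotProduct_star_self_eq_zero, ← hInner_eq_dotProduct, hInner_sub_smul_left,
      hInner_self_sub_smul_conjFun hρ, hInner_conjFun_sub_smul_conjFun hρ, hζ]
    ring

/-- Toy model, Proposition 1 (kerP): away from the origin, `P_f(ρ) = 0` iff
`f(ξ(ρ)) = 0` or `ξ(ρ) = 1`. -/
theorem statement6 {N : ℕ} (f : ℝ → ℂ) (ρ : Fin N → ℂ) (hρ : ρ ≠ 0) :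
    P f ρ = 0 ↔ f (xi ρ) = 0 ∨ xi ρ = 1 := by
  rw [P, smul_eq_zero, sub_smul_conjFun_eq_zero_iff hρ]
  refine or_congr_right (and_iff_right_of_imp fun hξ => ?_)
  simp [hξ]

end PureSpinorToy
end
end
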